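/- Let F ⊆ 2^[n] be shattering-extremal with dim_VC(F) ≤ 2, let α, β ∈ [n] be distinct with {α, β} not strongly shattered by F, and let P, W, Q ∈ F satisfy Q △ W = {α} and P △ W = {β}. Set V = W △ {α, β}. Then every X ∈ F with |X △ V| = 1 equals P or Q; that is, in the inclusion graph of F ∪ {V} the new vertex V is adjacent only to P and Q. -/

import Mathlib

open scoped symmDiff

/-- `𝓕` shatters `S`: every subset of `S` is the trace of some member of `𝓕` on `S`. -/
def Shatters {n : ℕ} (𝓕 : Finset (Finset (Fin n))) (S : Finset (Fin n)) : Prop :=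
  ∀ T ⊆ S, ∃ F ∈ 𝓕, F ∩ S = T

/-- `𝓕` strongly shatters `S`: there is `I ⊆ [n] \ S` with `{H ∪ I : H ⊆ S} ⊆ 𝓕`. -/
def StronglyShatters {n : ℕ} (𝓕 : Finset (Finset (Fin n))) (S : Finset (Fin n)) : Prop :=
  ∃ I : Finset (Fin n), I ⊆ Sᶜ ∧ ∀ H ⊆ S, H ∪ I ∈ 𝓕

open Classical in
/-- The family of subsets of `[n]` shattered by `𝓕`. -/
noncomputable def Sh {n : ℕ} (𝓕 : Finset (Finset (Fin n))) : Finset (Finset (Fin n)) :=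
  Finset.univ.filter (Shatters 𝓕)

open Classical in
/-- The family of subsets of `[n]` strongly shattered by `𝓕`. -/
noncomputable def st {n : ℕ} (𝓕 : Finset (Finset (Fin n))) : Finset (Finset (Fin n)) :=
  Finset.univ.filter (StronglyShatters 𝓕)

/-- `𝓕` is shattering-extremal if it shatters exactly `|𝓕|` sets. -/
def Extremal {n : ℕ} (𝓕 : Finset (Finset (Fin n))) : Prop :=
  (Sh 𝓕).card = 𝓕.card

/-- The Vapnik–Chervonenkis dimension: the maximum cardinality of a shattered set. -/
noncomputable def dimVC {n : ℕ} (𝓕 : Finset (Finset (Fin n))) : ℕ :=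
  (Sh 𝓕).sup Finset.card

/-!
Let `S = {α, β}` and `X ∆ V = {γ}`. If `γ = α` or `γ = β`, then `X` is `P` or `Q` by
cancelling symmetric differences. Otherwise the traces of `W`, `Q`, `P` and `X` on `S` are
`W ∩ S` translated by `∅`, `{α}`, `{β}` and `S`, so `𝓕` shatters `S`. This is impossible, since an
extremal family strongly shatters every set it shatters (Bollobás–Radcliffe).

That theorem is proved by induction on `|𝒜|`. Pick `a ∈ s`, and let `ℳ` and `𝒩` be the families
of sets `u ∌ a` with `u ∪ {a} ∈ 𝒜` and `u ∈ 𝒜` respectively. Then `|𝒜| = |ℳ ∪ 𝒩| + |ℳ ∩ 𝒩|`,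
and `𝒜` shatters every set shattered by `ℳ ∪ 𝒩`, as well as `t ∪ {a}` for every `t` shattered by
`ℳ ∩ 𝒩`; these sets are all distinct. Together with Pajor's inequality for `ℳ ∪ 𝒩` and `ℳ ∩ 𝒩`,
extremality of `𝒜` forces `ℳ ∩ 𝒩` to be extremal and to shatter `s \ {a}`. A subcube of `ℳ ∩ 𝒩`
over `s \ {a}` then yields a subcube of `𝒜` over `s`.
-/

namespace Finset

variable {α : Type*} [DecidableEq α] {𝒜 : Finset (Finset α)} {s u W : Finset α} {a b : α}

lemma Shatters.notMem_of_forall_notMem (h : ∀ u ∈ 𝒜, a ∉ u) (hs : 𝒜.Shatters s) : a ∉ s := by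
  obtain ⟨u, hu, hsu⟩ := hs.exists_superset
  exact notMem_mono hsu (h u hu)

lemma notMem_of_mem_memberSubfamily_union
    (hu : u ∈ 𝒜.memberSubfamily a ∪ 𝒜.nonMemberSubfamily a) : a ∉ u := by
  rcases mem_union.1 hu with hu | hu
  · exact (mem_memberSubfamily.1 hu).2
  · exact (mem_nonMemberSubfamily.1 hu).2

lemma notMem_of_mem_memberSubfamily_inter
    (hu : u ∈ 𝒜.memberSubfamily a ∩ 𝒜.nonMemberSubfamily a) : a ∉ u :=
  (mem_nonMemberSubfamily.1 (mem_inter.1 hu).2).2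

lemma card_memberSubfamily_union_add_card_memberSubfamily_inter (a : α) (𝒜 : Finset (Finset α)) :
    #(𝒜.memberSubfamily a ∪ 𝒜.nonMemberSubfamily a) +
      #(𝒜.memberSubfamily a ∩ 𝒜.nonMemberSubfamily a) = #𝒜 := by
  rw [card_union_add_card_inter, card_memberSubfamily_add_card_nonMemberSubfamily]

lemma Shatters.of_memberSubfamily_union
    (hs : (𝒜.memberSubfamily a ∪ 𝒜.nonMemberSubfamily a).Shatters s) : 𝒜.Shatters s := by
  have has : a ∉ s := hs.notMem_of_forall_notMem fun _ ↦ notMem_of_mem_memberSubfamily_union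
  rw [memberSubfamily_union_nonMemberSubfamily] at hs
  intro t ht
  obtain ⟨v, hv, rfl⟩ := hs ht
  obtain ⟨u, hu, rfl⟩ := mem_image.1 hv
  exact ⟨u, hu, by rw [inter_erase, erase_eq_of_notMem fun h ↦ has (mem_inter.1 h).1]⟩

lemma Shatters.insert_of_memberSubfamily_inter
    (hs : (𝒜.memberSubfamily a ∩ 𝒜.nonMemberSubfamily a).Shatters s) :
    𝒜.Shatters (insert a s) := by
  intro t ht
  obtain ⟨u, hu, hsu⟩ := hs (subset_insert_iff.1 ht)
  obtain ⟨hM, hN⟩ := mem_inter.1 hu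
  rw [mem_memberSubfamily] at hM
  rw [mem_nonMemberSubfamily] at hN
  by_cases hat : a ∈ t
  · exact ⟨insert a u, hM.1, by rw [← insert_inter_distrib, hsu, insert_erase hat]⟩
  · exact ⟨u, hN.1, by rw [insert_inter_of_notMem hN.2, hsu, erase_eq_of_notMem hat]⟩

lemma shatterer_memberSubfamily_union_image_insert_subset (a : α) (𝒜 : Finset (Finset α)) :
    (𝒜.memberSubfamily a ∪ 𝒜.nonMemberSubfamily a).shatterer ∪
      (𝒜.memberSubfamily a ∩ 𝒜.nonMemberSubfamily a).shatterer.image (insert a) ⊆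
        𝒜.shatterer := by
  refine union_subset (fun s hs ↦ ?_) (forall_mem_image.2 fun s hs ↦ ?_)
  · exact mem_shatterer.2 (mem_shatterer.1 hs).of_memberSubfamily_union
  · exact mem_shatterer.2 (mem_shatterer.1 hs).insert_of_memberSubfamily_inter

lemma card_shatterer_memberSubfamily_union_image_insert (a : α) (𝒜 : Finset (Finset α)) :
    #((𝒜.memberSubfamily a ∪ 𝒜.nonMemberSubfamily a).shatterer ∪
      (𝒜.memberSubfamily a ∩ 𝒜.nonMemberSubfamily a).shatterer.image (insert a)) =
        #(𝒜.memberSubfamily a ∪ 𝒜.nonMemberSubfamily a).shatterer +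
          #(𝒜.memberSubfamily a ∩ 𝒜.nonMemberSubfamily a).shatterer := by
  have hinter (s) (hs : s ∈ (𝒜.memberSubfamily a ∩ 𝒜.nonMemberSubfamily a).shatterer) : a ∉ s :=
    (mem_shatterer.1 hs).notMem_of_forall_notMem fun _ ↦ notMem_of_mem_memberSubfamily_inter
  rw [card_union_of_disjoint, card_image_of_injOn (insert_erase_invOn.2.injOn.mono hinter)]
  refine disjoint_left.2 fun s hs hs' ↦ ?_
  obtain ⟨t, -, rfl⟩ := mem_image.1 hs'
  exact (mem_shatterer.1 hs).notMem_of_forall_notMem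
    (fun _ ↦ notMem_of_mem_memberSubfamily_union) (mem_insert_self a t)

lemma Shatters.memberSubfamily_inter_of_card_shatterer_eq (h : #𝒜.shatterer = #𝒜)
    (hs : 𝒜.Shatters s) (ha : a ∈ s) :
    #(𝒜.memberSubfamily a ∩ 𝒜.nonMemberSubfamily a).shatterer =
        #(𝒜.memberSubfamily a ∩ 𝒜.nonMemberSubfamily a) ∧
      (𝒜.memberSubfamily a ∩ 𝒜.nonMemberSubfamily a).Shatters (s.erase a) := by
  have hsub := shatterer_memberSubfamily_union_image_insert_subset a 𝒜
  have hcard := card_shatterer_memberSubfamily_union_image_insert a 𝒜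
  have hsplit := card_memberSubfamily_union_add_card_memberSubfamily_inter a 𝒜
  have hℬ := card_le_card_shatterer (𝒜.memberSubfamily a ∪ 𝒜.nonMemberSubfamily a)
  have h𝒞 := card_le_card_shatterer (𝒜.memberSubfamily a ∩ 𝒜.nonMemberSubfamily a)
  have hle := card_le_card hsub
  refine ⟨by omega, ?_⟩
  have hs' := eq_of_subset_of_card_le hsub (by omega) ▸ mem_shatterer.2 hs
  obtain hsℬ | hs𝒞 := mem_union.1 hs'
  · exact absurd ha <| (mem_shatterer.1 hsℬ).notMem_of_forall_notMem
      fun _ ↦ notMem_of_mem_memberSubfamily_union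
  · obtain ⟨t, ht, rfl⟩ := mem_image.1 hs𝒞
    have hat : a ∉ t := (mem_shatterer.1 ht).notMem_of_forall_notMem
      fun _ ↦ notMem_of_mem_memberSubfamily_inter
    rw [erase_insert hat]
    exact mem_shatterer.1 ht

theorem Shatters.exists_subcube_of_card_shatterer_eq (h : #𝒜.shatterer = #𝒜)
    (hs : 𝒜.Shatters s) : ∃ I, Disjoint I s ∧ ∀ t ⊆ s, t ∪ I ∈ 𝒜 := by
  induction hn : #𝒜 using Nat.strong_induction_on generalizing 𝒜 s with
  | _ n ih =>
    obtain rfl | ⟨a, ha⟩ := s.eq_empty_or_nonempty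
    · obtain ⟨I, hI⟩ := hs.nonempty
      exact ⟨I, disjoint_empty_right I, fun t ht ↦ by rwa [subset_empty.1 ht, empty_union]⟩
    obtain ⟨h𝒞, hs𝒞⟩ := hs.memberSubfamily_inter_of_card_shatterer_eq h ha
    have hlt : #(𝒜.memberSubfamily a ∩ 𝒜.nonMemberSubfamily a) < n := by
      have hsplit := card_memberSubfamily_union_add_card_memberSubfamily_inter a 𝒜
      have hℬ := hs.nonempty.image (erase · a)
      rw [← memberSubfamily_union_nonMemberSubfamily, ← card_pos] at hℬ
      omega
    obtain ⟨I, hIs, hI⟩ := ih _ hlt h𝒞 hs𝒞 rfl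
    have haI : a ∉ I := by
      simpa using notMem_of_mem_memberSubfamily_inter (hI ∅ (empty_subset _))
    refine ⟨I, ?_, fun t ht ↦ ?_⟩
    · rw [← insert_erase ha, disjoint_insert_right]
      exact ⟨haI, hIs⟩
    obtain ⟨hM, hN⟩ := mem_inter.1 (hI (t.erase a) (erase_subset_erase a ht))
    by_cases hat : a ∈ t
    · simpa [← insert_union, insert_erase hat] using (mem_memberSubfamily.1 hM).1
    · simpa [erase_eq_of_notMem hat] using (mem_nonMemberSubfamily.1 hN).1

lemma shatters_of_forall_exists_symmDiff (h : ∀ t ⊆ s, ∃ u ∈ 𝒜, s ∩ (u ∆ W) = t) :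
    𝒜.Shatters s := by
  intro t ht
  obtain ⟨u, hu, hsu⟩ := h ((s ∩ W) ∆ t) fun x hx ↦ by
    rcases mem_symmDiff.1 hx with ⟨hx, -⟩ | ⟨hx, -⟩
    exacts [(mem_inter.1 hx).1, ht hx]
  refine ⟨u, hu, ?_⟩
  have hdistrib : s ∩ (u ∆ W) = (s ∩ u) ∆ (s ∩ W) := inf_symmDiff_distrib_left s u W
  rwa [hdistrib, symmDiff_comm, symmDiff_right_inj] at hsu

lemma shatters_pair {A B C : Finset α} (hW : W ∈ 𝒜) (hA : A ∈ 𝒜) (hB : B ∈ 𝒜) (hC : C ∈ 𝒜)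
    (hAW : A ∆ W = {a}) (hBW : B ∆ W = {b}) (hCW : {a, b} ⊆ C ∆ W) : 𝒜.Shatters {a, b} := by
  refine shatters_of_forall_exists_symmDiff (W := W) fun t ht ↦ ?_
  have hta : t.erase a = ∅ ∨ t.erase a = {b} := subset_singleton_iff.1 (subset_insert_iff.1 ht)
  by_cases ha : a ∈ t
  · rw [← insert_erase ha]
    rcases hta with h | h <;> rw [h]
    · exact ⟨A, hA, by rw [hAW]; simp⟩
    · exact ⟨C, hC, inter_eq_left.2 hCW⟩
  · rw [← erase_eq_of_notMem ha]
    rcases hta with h | h <;> rw [h]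
    · exact ⟨W, hW, by simp⟩
    · exact ⟨B, hB, by rw [hBW]; simp⟩

end Finset

open scoped Finset

lemma shatters_iff_finset_shatters {n : ℕ} {𝓕 : Finset (Finset (Fin n))} {S : Finset (Fin n)} :
    Shatters 𝓕 S ↔ 𝓕.Shatters S := by
  simp only [Shatters, Finset.Shatters, Finset.inter_comm]

lemma Sh_eq_shatterer {n : ℕ} (𝓕 : Finset (Finset (Fin n))) : Sh 𝓕 = 𝓕.shatterer := by
  ext S
  simp [Sh, shatters_iff_finset_shatters]

lemma Extremal.card_shatterer {n : ℕ} {𝓕 : Finset (Finset (Fin n))} (h : Extremal 𝓕) :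
    #𝓕.shatterer = #𝓕 :=
  Sh_eq_shatterer 𝓕 ▸ h

lemma Extremal.stronglyShatters {n : ℕ} {𝓕 : Finset (Finset (Fin n))} {S : Finset (Fin n)}
    (h : Extremal 𝓕) (hS : 𝓕.Shatters S) : StronglyShatters 𝓕 S := by
  obtain ⟨I, hIS, hI⟩ := hS.exists_subcube_of_card_shatterer_eq h.card_shatterer
  exact ⟨I, Finset.subset_compl_iff_disjoint_right.2 hIS, hI⟩

theorem stepB_neighbors_general (n : ℕ) (𝓕 : Finset (Finset (Fin n))) (h : Extremal 𝓕)
    (α β : Fin n) (hne : α ≠ β)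
    (hst : ¬ StronglyShatters 𝓕 ({α, β} : Finset (Fin n)))
    (P W Q : Finset (Fin n)) (hP : P ∈ 𝓕) (hW : W ∈ 𝓕) (hQ : Q ∈ 𝓕)
    (hQW : Q ∆ W = ({α} : Finset (Fin n))) (hPW : P ∆ W = ({β} : Finset (Fin n))) :
    ∀ X ∈ 𝓕, (X ∆ (W ∆ ({α, β} : Finset (Fin n)))).card = 1 → X = P ∨ X = Q := by
  intro X hX hXV
  obtain ⟨γ, hγ⟩ := Finset.card_eq_one.1 hXV
  have hXW : X ∆ W = {γ} ∆ {α, β} := by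
    rw [← hγ, ← symmDiff_assoc, symmDiff_symmDiff_cancel_right]
  have hpair : ({α, β} : Finset (Fin n)) = {α} ∆ {β} := by
    rw [(Finset.disjoint_singleton.2 hne).symmDiff_eq_sup, Finset.insert_eq]
    rfl
  by_cases hγα : γ = α
  · left
    rwa [hγα, hpair, symmDiff_symmDiff_cancel_left, ← hPW, symmDiff_left_inj] at hXW
  by_cases hγβ : γ = β
  · right
    rwa [hγβ, hpair, symmDiff_left_comm, symmDiff_self, symmDiff_bot, ← hQW,
      symmDiff_left_inj] at hXW
  refine absurd (h.stronglyShatters (Finset.shatters_pair hW hQ hP hX hQW hPW ?_)) hst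
  intro x hx
  have hxγ : x ≠ γ := by
    rintro rfl
    simp only [Finset.mem_insert, Finset.mem_singleton] at hx
    tauto
  rw [hXW, Finset.mem_symmDiff, Finset.mem_singleton]
  exact Or.inr ⟨hx, hxγ⟩

/-- In Step B the new vertex `V = W ∆ {α, β}` is adjacent in the inclusion graph of
`𝓕 ∪ {V}` only to `P` and `Q`. -/
theorem stepB_neighbors (n : ℕ) (𝓕 : Finset (Finset (Fin n))) (h : Extremal 𝓕)
    (hdim : dimVC 𝓕 ≤ 2) (α β : Fin n) (hne : α ≠ β)
    (hst : ¬ StronglyShatters 𝓕 ({α, β} : Finset (Fin n)))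
    (P W Q : Finset (Fin n)) (hP : P ∈ 𝓕) (hW : W ∈ 𝓕) (hQ : Q ∈ 𝓕)
    (hQW : Q ∆ W = ({α} : Finset (Fin n))) (hPW : P ∆ W = ({β} : Finset (Fin n))) :
    ∀ X ∈ 𝓕, (X ∆ (W ∆ ({α, β} : Finset (Fin n)))).card = 1 → X = P ∨ X = Q :=
  stepB_neighbors_general n 𝓕 h α β hne hst P W Q hP hW hQ hQW hPW
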